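/- arXiv:2309.13993 — 4 statements merged into one kernel-verified Lean document; each statement's English description precedes it below -/
import Mathlib

section
/- Let m ∈ ℝ^{(k-1)×k} and define τ(m) = min over nonzero rank-1 Hadamard vectors h = H(g) with g ∈ ℝ^{k-1} of ‖h^T · H(m)‖₂ / ‖h‖₂, where H(g) ∈ ℝ^{2^{k-1}} has entry ∏_{i∈S} g_i at index S. Then σ_k(H(m)) ≥ τ(m)/√k. -/
open Matrix Finset

/-- Euclidean norm of a finitely-indexed real vector. -/
noncomputable def e2 {n : Type*} [Fintype n] (x : n → ℝ) : ℝ :=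
  Real.sqrt (∑ i, x i ^ 2)

/-- The `j`-th largest singular value of a real matrix, via the Courant–Fischer
max–min characterization: the supremum over `j`-dimensional subspaces of the
infimum of `‖A x‖₂` over unit vectors `x` in the subspace. -/
noncomputable def sval {m' n : Type*} [Fintype m'] [Fintype n] (A : Matrix m' n ℝ) (j : ℕ) : ℝ :=
  ⨆ V : {V : Submodule ℝ (n → ℝ) // Module.finrank ℝ V = j},
    ⨅ x : {x : n → ℝ // x ∈ V.1 ∧ e2 x = 1}, e2 (A.mulVec x.1)

/-- Hadamard extension: rows indexed by subsets `S ⊆ [n]`, entry `(S, j)` equal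
to `∏ i ∈ S, m i j`. -/
noncomputable def hadamardExt {n k : ℕ} (m : Matrix (Fin n) (Fin k) ℝ) :
    Matrix (Finset (Fin n)) (Fin k) ℝ :=
  Matrix.of fun S j => ∏ i ∈ S, m i j

/-- The `L₂ → L₂` operator norm of a real matrix. -/
noncomputable def opN {m' n : Type*} [Fintype m'] [Fintype n] (A : Matrix m' n ℝ) : ℝ :=
  ⨆ x : {x : n → ℝ // e2 x = 1}, e2 (A.mulVec x.1)

/- ### Auxiliary lemmas -/

lemma e2_nonneg {n : Type*} [Fintype n] (x : n → ℝ) : 0 ≤ e2 x := Real.sqrt_nonneg _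

lemma abs_dot_le {n : Type*} [Fintype n] (f g : n → ℝ) :
    |∑ i, f i * g i| ≤ e2 f * e2 g := by
  have h := Finset.sum_mul_sq_le_sq_mul_sq Finset.univ f g
  have h2 : |∑ i, f i * g i| = Real.sqrt ((∑ i, f i * g i) ^ 2) :=
    (Real.sqrt_sq_eq_abs _).symm
  rw [h2, e2, e2, ← Real.sqrt_mul (by positivity)]
  exact Real.sqrt_le_sqrt h

lemma e2_le_sum_abs {n : Type*} [Fintype n] (f : n → ℝ) : e2 f ≤ ∑ i, |f i| := by
  rw [e2]
  have h1 : ∑ i, f i ^ 2 ≤ (∑ i, |f i|) ^ 2 := by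
    have := Finset.sum_sq_le_sq_sum_of_nonneg
      (s := Finset.univ) (f := fun i => |f i|) (fun i _ => abs_nonneg _)
    simpa [sq_abs] using this
  calc Real.sqrt (∑ i, f i ^ 2) ≤ Real.sqrt ((∑ i, |f i|) ^ 2) := Real.sqrt_le_sqrt h1
  _ = ∑ i, |f i| := Real.sqrt_sq (by positivity)

/-- Greedy elimination: we can choose values `g₀` on the rows outside `F` so that every
column of `C` is either "killed" (some factor `1 + g₀ i * M i j` vanishes at a used row)
or vanishes identically on the nonempty leftover set `F` of rows. -/
lemma greedy {α β : Type*} [DecidableEq α] [DecidableEq β] (M : α → β → ℝ) :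
    ∀ (n : ℕ) (I : Finset α) (C : Finset β), I.card = n → I.card = C.card →
    ∃ (g₀ : α → ℝ) (F : Finset α), F ⊆ I ∧
      ∀ j ∈ C, (∃ i ∈ I, i ∉ F ∧ 1 + g₀ i * M i j = 0) ∨
        ((∀ i ∈ F, M i j = 0) ∧ F.Nonempty) := by
  intro n
  induction n with
  | zero =>
    intro I C hI hC
    refine ⟨0, ∅, Finset.empty_subset _, ?_⟩
    intro j hj
    have hc : C = ∅ := Finset.card_eq_zero.mp (by omega)
    simp [hc] at hj
  | succ n ih =>
    intro I C hI hC
    by_cases hedge : ∃ i ∈ I, ∃ j ∈ C, M i j ≠ 0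
    · obtain ⟨i0, hi0, j0, hj0, hM⟩ := hedge
      obtain ⟨g₀, F, hFsub, hg⟩ := ih (I.erase i0) (C.erase j0)
        (by rw [Finset.card_erase_of_mem hi0]; omega)
        (by rw [Finset.card_erase_of_mem hi0, Finset.card_erase_of_mem hj0]; omega)
      refine ⟨Function.update g₀ i0 (-1 / M i0 j0), F,
        hFsub.trans (Finset.erase_subset _ _), ?_⟩
      intro j hj
      by_cases hjj : j = j0
      · left
        refine ⟨i0, hi0, fun hmem => (Finset.notMem_erase i0 I) (hFsub hmem), ?_⟩
        rw [hjj, Function.update_self]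
        field_simp
        ring
      · rcases hg j (Finset.mem_erase.mpr ⟨hjj, hj⟩) with ⟨i, hiI, hiF, hval⟩ | hr
        · left
          have hne : i ≠ i0 := (Finset.mem_erase.mp hiI).1
          exact ⟨i, Finset.mem_of_mem_erase hiI, hiF, by
            rwa [Function.update_of_ne hne]⟩
        · right; exact hr
    · push_neg at hedge
      refine ⟨0, I, Finset.Subset.refl I, ?_⟩
      intro j hj
      right
      refine ⟨fun i hi => hedge i hi j hj, ?_⟩
      exact Finset.card_pos.mp (by omega)

/-- Product formula for a rank-one test vector against the Hadamard extension. -/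
lemma vecMul_hadamard {n' k : ℕ} (m : Matrix (Fin n') (Fin k) ℝ) (g : Fin n' → ℝ) (j : Fin k) :
    Matrix.vecMul (fun S : Finset (Fin n') => ∏ i ∈ S, g i) (hadamardExt m) j
      = ∏ i, (1 + g i * m i j) := by
  have hpa := Finset.prod_add (fun i => g i * m i j) (fun _ => (1 : ℝ)) Finset.univ
  simp only [Finset.prod_const_one, mul_one, Finset.powerset_univ] at hpa
  have h1 : (∏ i, (1 + g i * m i j)) = ∏ i, (g i * m i j + 1) := by
    refine Finset.prod_congr rfl fun i _ => add_comm _ _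
  rw [h1, hpa]
  simp only [Matrix.vecMul, dotProduct, hadamardExt, Matrix.of_apply]
  refine Finset.sum_congr rfl fun S _ => ?_
  rw [← Finset.prod_mul_distrib]

/-- The Euclidean norm of the rank-one test vector `H(g)` is at least `1`. -/
lemma one_le_e2_h {n' : ℕ} (g : Fin n' → ℝ) :
    1 ≤ e2 (fun S : Finset (Fin n') => ∏ i ∈ S, g i) := by
  rw [e2]
  have h0 : (1 : ℝ) = ((∏ i ∈ (∅ : Finset (Fin n')), g i) ^ 2) := by simp
  have := Finset.single_le_sum
    (f := fun S : Finset (Fin n') => (∏ i ∈ S, g i) ^ 2)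
    (fun S _ => sq_nonneg _) (Finset.mem_univ (∅ : Finset (Fin n')))
  have h2 : (1 : ℝ) ≤ ∑ S : Finset (Fin n'), (∏ i ∈ S, g i) ^ 2 := by
    simpa using this
  calc (1 : ℝ) = Real.sqrt 1 := by rw [Real.sqrt_one]
  _ ≤ _ := Real.sqrt_le_sqrt h2

/-- Key construction: for every `ε > 0` there is `g` such that all coordinates
`j ≠ ℓ` of `H(g)ᵀ H(m)` are at most `ε` times the norm of `H(g)`. -/
lemma kill {n' k : ℕ} (m : Matrix (Fin n') (Fin k) ℝ) (ℓ : Fin k)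
    (hcard : n' = k - 1) (hk : 1 ≤ k) {ε : ℝ} (hε : 0 < ε) :
    ∃ g : Fin n' → ℝ, ∀ j : Fin k, j ≠ ℓ →
      |∏ i, (1 + g i * m i j)| ≤ ε * e2 (fun S : Finset (Fin n') => ∏ i ∈ S, g i) := by
  classical
  have hcard2 : (Finset.univ : Finset (Fin n')).card
      = ((Finset.univ : Finset (Fin k)).erase ℓ).card := by
    rw [Finset.card_erase_of_mem (Finset.mem_univ ℓ)]
    simp [hcard]
  obtain ⟨g₀, F, hFsub, hg⟩ := greedy (fun i j => m i j) (Finset.univ.card)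
    Finset.univ ((Finset.univ : Finset (Fin k)).erase ℓ) rfl hcard2
  rcases Finset.eq_empty_or_nonempty F with hF | hF
  · -- every column j ≠ ℓ is killed exactly
    refine ⟨g₀, fun j hj => ?_⟩
    rcases hg j (Finset.mem_erase.mpr ⟨hj, Finset.mem_univ j⟩) with ⟨i, _, _, hval⟩ | hr
    · have : (∏ i, (1 + g₀ i * m i j)) = 0 :=
        Finset.prod_eq_zero (Finset.mem_univ i) hval
      rw [this, abs_zero]
      exact mul_nonneg hε.le (e2_nonneg _)
    · exact absurd hr.2 (by simp [hF])
  · -- leftover rows exist; blow them up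
    set c : ℝ := ∑ j : Fin k, |∏ i ∈ Fᶜ, (1 + g₀ i * m i j)| with hc
    have hc0 : 0 ≤ c := Finset.sum_nonneg fun _ _ => abs_nonneg _
    set t : ℝ := max 1 (c / ε) with ht
    have ht1 : (1 : ℝ) ≤ t := le_max_left _ _
    set g : Fin n' → ℝ := fun i => if i ∈ F then t else g₀ i with hgdef
    obtain ⟨i1, hi1⟩ := hF
    -- t ≤ ‖H(g)‖
    have hte2 : t ≤ e2 (fun S : Finset (Fin n') => ∏ i ∈ S, g i) := by
      rw [e2]
      have hsingle2 : t ^ 2 ≤ ∑ S : Finset (Fin n'), (∏ i ∈ S, g i) ^ 2 := by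
        have hsingle := Finset.single_le_sum
          (f := fun S : Finset (Fin n') => (∏ i ∈ S, g i) ^ 2)
          (fun S _ => sq_nonneg _) (Finset.mem_univ ({i1} : Finset (Fin n')))
        simpa [hgdef, hi1] using hsingle
      calc t = Real.sqrt (t ^ 2) := (Real.sqrt_sq (by linarith)).symm
      _ ≤ _ := Real.sqrt_le_sqrt hsingle2
    refine ⟨g, fun j hj => ?_⟩
    rcases hg j (Finset.mem_erase.mpr ⟨hj, Finset.mem_univ j⟩) with ⟨i, _, hiF, hval⟩ | hr
    · have hgi : g i = g₀ i := by simp [hgdef, hiF]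
      have : (∏ i, (1 + g i * m i j)) = 0 :=
        Finset.prod_eq_zero (Finset.mem_univ i) (by rw [hgi]; exact hval)
      rw [this, abs_zero]
      exact mul_nonneg hε.le (e2_nonneg _)
    · -- column j vanishes on F
      have hsplit : (∏ i, (1 + g i * m i j))
          = (∏ i ∈ F, (1 + g i * m i j)) * ∏ i ∈ Fᶜ, (1 + g i * m i j) :=
        (Finset.prod_mul_prod_compl F _).symm
      have hFone : (∏ i ∈ F, (1 + g i * m i j)) = 1 := by
        refine Finset.prod_eq_one fun i hi => ?_
        rw [hr.1 i hi]; ring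
      have hFc : (∏ i ∈ Fᶜ, (1 + g i * m i j)) = ∏ i ∈ Fᶜ, (1 + g₀ i * m i j) := by
        refine Finset.prod_congr rfl fun i hi => ?_
        have : i ∉ F := Finset.mem_compl.mp hi
        simp [hgdef, this]
      have habs : |∏ i, (1 + g i * m i j)| = |∏ i ∈ Fᶜ, (1 + g₀ i * m i j)| := by
        rw [hsplit, hFone, one_mul, hFc]
      have hle_c : |∏ i ∈ Fᶜ, (1 + g₀ i * m i j)| ≤ c := by
        exact Finset.single_le_sum (f := fun j : Fin k => |∏ i ∈ Fᶜ, (1 + g₀ i * m i j)|)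
          (fun _ _ => abs_nonneg _) (Finset.mem_univ j)
      have hct : c ≤ ε * t := by
        have : c / ε ≤ t := le_max_right _ _
        calc c = ε * (c / ε) := by field_simp
        _ ≤ ε * t := by nlinarith
      calc |∏ i, (1 + g i * m i j)| = |∏ i ∈ Fᶜ, (1 + g₀ i * m i j)| := habs
      _ ≤ c := hle_c
      _ ≤ ε * t := hct
      _ ≤ ε * e2 (fun S : Finset (Fin n') => ∏ i ∈ S, g i) := by nlinarith

/-- Per-vector bound: for any unit vector `x`, `τ(m) ≤ √k · ‖H(m) x‖`. -/
lemma keyB {k : ℕ} (hk : 1 ≤ k) (m : Matrix (Fin (k - 1)) (Fin k) ℝ) (x : Fin k → ℝ)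
    (hx : e2 x = 1) :
    (⨅ g : Fin (k - 1) → ℝ,
        e2 (Matrix.vecMul (fun S : Finset (Fin (k - 1)) => ∏ i ∈ S, g i) (hadamardExt m)) /
          e2 (fun S : Finset (Fin (k - 1)) => ∏ i ∈ S, g i))
      ≤ Real.sqrt k * e2 ((hadamardExt m).mulVec x) := by
  classical
  have hk0 : (0 : ℝ) < k := by exact_mod_cast hk
  have hsum : ∑ j, x j ^ 2 = 1 := by
    have h0 : (0 : ℝ) ≤ ∑ j, x j ^ 2 := Finset.sum_nonneg fun _ _ => sq_nonneg _
    have := hx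
    rw [e2] at this
    nlinarith [Real.sq_sqrt h0, Real.sqrt_nonneg (∑ j, x j ^ 2)]
  -- pick the big coordinate
  obtain ⟨ℓ, hℓ⟩ : ∃ ℓ : Fin k, 1 / (k : ℝ) ≤ x ℓ ^ 2 := by
    by_contra hcon
    push_neg at hcon
    have hne : (Finset.univ : Finset (Fin k)).Nonempty := by
      refine ⟨⟨0, hk⟩, Finset.mem_univ _⟩
    have hlt : ∑ j, x j ^ 2 < ∑ _j : Fin k, 1 / (k : ℝ) :=
      Finset.sum_lt_sum_of_nonempty hne fun j _ => hcon j
    rw [hsum] at hlt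
    rw [Finset.sum_const, Finset.card_univ, Fintype.card_fin, nsmul_eq_mul] at hlt
    rw [mul_one_div, div_self (ne_of_gt hk0)] at hlt
    exact lt_irrefl _ hlt
  have hxj1 : ∀ j, |x j| ≤ 1 := by
    intro j
    have h1 : x j ^ 2 ≤ 1 := by
      have h := Finset.single_le_sum (f := fun j => x j ^ 2)
        (fun _ _ => sq_nonneg _) (Finset.mem_univ j)
      have h' : x j ^ 2 ≤ ∑ i, x i ^ 2 := h
      linarith [hsum]
    calc |x j| = Real.sqrt (x j ^ 2) := (Real.sqrt_sq_eq_abs _).symm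
    _ ≤ Real.sqrt 1 := Real.sqrt_le_sqrt h1
    _ = 1 := Real.sqrt_one
  have hsk : (0 : ℝ) < Real.sqrt k := Real.sqrt_pos.mpr hk0
  have hxl : 1 ≤ Real.sqrt k * |x ℓ| := by
    have h1 : Real.sqrt (1 / (k : ℝ)) ≤ |x ℓ| := by
      rw [← Real.sqrt_sq_eq_abs]
      exact Real.sqrt_le_sqrt hℓ
    calc (1 : ℝ) = Real.sqrt k * Real.sqrt (1 / (k : ℝ)) := by
          rw [← Real.sqrt_mul hk0.le, mul_one_div, div_self (ne_of_gt hk0), Real.sqrt_one]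
    _ ≤ Real.sqrt k * |x ℓ| := by nlinarith
  refine le_of_forall_pos_le_add fun ε hε => ?_
  set C : ℝ := Real.sqrt k * k + k with hCdef
  have hC : 0 < C := by positivity
  set ε' : ℝ := ε / C with hε'def
  have hε' : 0 < ε' := div_pos hε hC
  obtain ⟨g, hgkill⟩ := kill m ℓ rfl hk hε'
  set N : ℝ := e2 (fun S : Finset (Fin (k - 1)) => ∏ i ∈ S, g i) with hN
  have hN1 : 1 ≤ N := one_le_e2_h g
  have hNpos : 0 < N := lt_of_lt_of_le one_pos hN1
  set v : Fin k → ℝ :=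
    Matrix.vecMul (fun S : Finset (Fin (k - 1)) => ∏ i ∈ S, g i) (hadamardExt m) with hv
  have hkill2 : ∀ j : Fin k, j ≠ ℓ → |v j| ≤ ε' * N := by
    intro j hj
    rw [hv, vecMul_hadamard]
    exact hgkill j hj
  -- Cauchy–Schwarz through the matrix
  have hdot : |∑ j, x j * v j| ≤ N * e2 ((hadamardExt m).mulVec x) := by
    have hswap : ∑ j, x j * v j
        = ∑ S : Finset (Fin (k - 1)), (∏ i ∈ S, g i) * ((hadamardExt m).mulVec x) S := by
      have h1 : ∑ j, x j * v j
          = Matrix.vecMul (fun S : Finset (Fin (k - 1)) => ∏ i ∈ S, g i)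
              (hadamardExt m) ⬝ᵥ x := by
        rw [hv]
        simp only [dotProduct]
        exact Finset.sum_congr rfl fun j _ => mul_comm _ _
      rw [h1, ← Matrix.dotProduct_mulVec]
      rfl
    rw [hswap]
    exact abs_dot_le _ _
  -- sum over the other coordinates
  have herase : ∑ j ∈ Finset.univ.erase ℓ, |v j| ≤ (k : ℝ) * (ε' * N) := by
    have h1 : ∑ j ∈ Finset.univ.erase ℓ, |v j|
        ≤ ∑ _j ∈ Finset.univ.erase ℓ, ε' * N :=
      Finset.sum_le_sum fun j hj => hkill2 j (Finset.mem_erase.mp hj).1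
    have h2 : ∑ _j ∈ Finset.univ.erase ℓ, ε' * N
        = ((Finset.univ.erase ℓ).card : ℝ) * (ε' * N) := by
      rw [Finset.sum_const, nsmul_eq_mul]
    have h3 : ((Finset.univ.erase ℓ).card : ℝ) ≤ (k : ℝ) := by
      have : (Finset.univ.erase ℓ).card ≤ k := by
        calc (Finset.univ.erase ℓ).card ≤ (Finset.univ : Finset (Fin k)).card :=
              Finset.card_le_card (Finset.erase_subset _ _)
        _ = k := by simp
      exact_mod_cast this
    calc ∑ j ∈ Finset.univ.erase ℓ, |v j| ≤ ((Finset.univ.erase ℓ).card : ℝ) * (ε' * N) := by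
          rw [← h2]; exact h1
    _ ≤ (k : ℝ) * (ε' * N) := mul_le_mul_of_nonneg_right h3 (by positivity)
  have heraseX : ∑ j ∈ Finset.univ.erase ℓ, |x j * v j| ≤ (k : ℝ) * (ε' * N) := by
    refine le_trans (Finset.sum_le_sum fun j _ => ?_) herase
    rw [abs_mul]
    nlinarith [hxj1 j, abs_nonneg (v j), abs_nonneg (x j)]
  -- bound the big coordinate
  have hvl : |x ℓ * v ℓ| ≤ N * e2 ((hadamardExt m).mulVec x) + (k : ℝ) * (ε' * N) := by
    have hsplit : x ℓ * v ℓ = (∑ j, x j * v j) - ∑ j ∈ Finset.univ.erase ℓ, x j * v j := by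
      rw [← Finset.add_sum_erase _ _ (Finset.mem_univ ℓ)]
      ring
    rw [hsplit]
    calc |(∑ j, x j * v j) - ∑ j ∈ Finset.univ.erase ℓ, x j * v j|
        ≤ |∑ j, x j * v j| + |∑ j ∈ Finset.univ.erase ℓ, x j * v j| := abs_sub _ _
    _ ≤ N * e2 ((hadamardExt m).mulVec x) + (k : ℝ) * (ε' * N) := by
        refine add_le_add hdot (le_trans (Finset.abs_sum_le_sum_abs _ _) heraseX)
  have hvl2 : |v ℓ| ≤ Real.sqrt k * (N * e2 ((hadamardExt m).mulVec x) + (k : ℝ) * (ε' * N)) := by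
    calc |v ℓ| = 1 * |v ℓ| := (one_mul _).symm
    _ ≤ (Real.sqrt k * |x ℓ|) * |v ℓ| := by nlinarith [abs_nonneg (v ℓ)]
    _ = Real.sqrt k * |x ℓ * v ℓ| := by rw [abs_mul]; ring
    _ ≤ _ := by nlinarith [hvl, abs_nonneg (x ℓ * v ℓ)]
  have he2v : e2 v ≤ |v ℓ| + (k : ℝ) * (ε' * N) := by
    calc e2 v ≤ ∑ j, |v j| := e2_le_sum_abs v
    _ = |v ℓ| + ∑ j ∈ Finset.univ.erase ℓ, |v j| :=
        (Finset.add_sum_erase _ _ (Finset.mem_univ ℓ)).symm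
    _ ≤ |v ℓ| + (k : ℝ) * (ε' * N) := by linarith [herase]
  have hfinal : e2 v ≤ (Real.sqrt k * e2 ((hadamardExt m).mulVec x) + ε) * N := by
    have hCe : C * ε' = ε := by
      rw [hε'def]; field_simp
    have : e2 v ≤ N * (Real.sqrt k * e2 ((hadamardExt m).mulVec x) + C * ε') := by
      rw [hCdef]
      nlinarith [he2v, hvl2, hε'.le, hNpos.le, hsk.le, e2_nonneg ((hadamardExt m).mulVec x)]
    rw [hCe] at this
    linarith [this]
  have hbdd : BddBelow (Set.range fun g : Fin (k - 1) → ℝ =>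
      e2 (Matrix.vecMul (fun S : Finset (Fin (k - 1)) => ∏ i ∈ S, g i) (hadamardExt m)) /
        e2 (fun S : Finset (Fin (k - 1)) => ∏ i ∈ S, g i)) := by
    refine ⟨0, ?_⟩
    rintro y ⟨g', rfl⟩
    exact div_nonneg (e2_nonneg _) (e2_nonneg _)
  refine le_trans (ciInf_le hbdd g) ?_
  rw [div_le_iff₀ hNpos]
  exact hfinal

/-- σ_k(H(m)) ≥ τ(m)/√k, where τ(m) is the infimum over rank-1
Hadamard test vectors h = H(g) of ‖hᵀ·H(m)‖₂/‖h‖₂. (Every such h is nonzero,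
since its coordinate at the empty set is 1.) -/
theorem stmt1 (k : ℕ) (hk : 1 ≤ k) (m : Matrix (Fin (k - 1)) (Fin k) ℝ) :
    (⨅ g : Fin (k - 1) → ℝ,
        e2 (Matrix.vecMul (fun S : Finset (Fin (k - 1)) => ∏ i ∈ S, g i) (hadamardExt m)) /
          e2 (fun S : Finset (Fin (k - 1)) => ∏ i ∈ S, g i)) / Real.sqrt k
      ≤ sval (hadamardExt m) k := by
  classical
  have hk0 : (0 : ℝ) < k := by exact_mod_cast hk
  have hsk : (0 : ℝ) < Real.sqrt k := Real.sqrt_pos.mpr hk0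
  have hfr : Module.finrank ℝ (Fin k → ℝ) = k := Module.finrank_fin_fun ℝ
  have htop : Module.finrank ℝ (⊤ : Submodule ℝ (Fin k → ℝ)) = k := by
    rw [finrank_top]; exact hfr
  set f : {V : Submodule ℝ (Fin k → ℝ) // Module.finrank ℝ V = k} → ℝ := fun V =>
    ⨅ x : {x : Fin k → ℝ // x ∈ V.1 ∧ e2 x = 1}, e2 ((hadamardExt m).mulVec x.1) with hf
  have hsub : ∀ V : {V : Submodule ℝ (Fin k → ℝ) // Module.finrank ℝ V = k},
      V = (⟨⊤, htop⟩ : {V : Submodule ℝ (Fin k → ℝ) // Module.finrank ℝ V = k}) := by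
    rintro ⟨V, hV⟩
    exact Subtype.ext (Submodule.eq_top_of_finrank_eq (by rw [hV, hfr]))
  have hbddA : BddAbove (Set.range f) := by
    refine ⟨f ⟨⊤, htop⟩, ?_⟩
    rintro y ⟨V, rfl⟩
    exact le_of_eq (congrArg f (hsub V))
  have hstep : f ⟨⊤, htop⟩ ≤ sval (hadamardExt m) k := le_ciSup hbddA ⟨⊤, htop⟩
  refine le_trans ?_ hstep
  -- the unit-vector subtype is nonempty
  haveI hne : Nonempty {x : Fin k → ℝ //
      x ∈ (⊤ : Submodule ℝ (Fin k → ℝ)) ∧ e2 x = 1} := by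
    set x0 : Fin k → ℝ := Pi.single (⟨0, hk⟩ : Fin k) (1 : ℝ) with hx0
    refine ⟨⟨x0, Submodule.mem_top, ?_⟩⟩
    rw [e2]
    have hs : ∑ j, x0 j ^ 2 = 1 := by
      rw [Finset.sum_eq_single (⟨0, hk⟩ : Fin k)]
      · simp [hx0]
      · intro b _ hb; simp [hx0, Pi.single_apply, hb]
      · intro h; exact absurd (Finset.mem_univ _) h
    rw [hs, Real.sqrt_one]
  rw [hf]
  refine le_ciInf ?_
  rintro ⟨x, _, hx⟩
  rw [div_le_iff₀ hsk]
  calc (⨅ g : Fin (k - 1) → ℝ,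
        e2 (Matrix.vecMul (fun S : Finset (Fin (k - 1)) => ∏ i ∈ S, g i) (hadamardExt m)) /
          e2 (fun S : Finset (Fin (k - 1)) => ∏ i ∈ S, g i))
      ≤ Real.sqrt k * e2 ((hadamardExt m).mulVec x) := keyB hk m x hx
  _ = e2 ((hadamardExt m).mulVec x) * Real.sqrt k := mul_comm _ _
end

section
/- Let m ∈ ℝ^{(k-1)×k} have ζ-separated rows (each row has pairwise entry differences at least ζ in absolute value) with all entries in [0,1]. Then for every g ∈ ℝ^{k-1}, with h = H(g) ∈ ℝ^{2^{k-1}} the vector with entries ∏_{i∈S} g_i, we have ‖h^T · H(m)‖₂ ≥ (ζ/(2√5))^{k-1} · ‖h‖₂. -/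
/-!
Since `(hᵀ H(m))_j = ∏ᵢ (1 + gᵢ mᵢⱼ)` and `‖h‖₂² = ∏ᵢ (1 + gᵢ²)`, it suffices to find one
column `j` with `(1 + gᵢ mᵢⱼ)² ≥ (ζ²/20)(1 + gᵢ²)` for every row `i`. Within a row, two
ζ-separated entries cannot both violate this bound, so each of the `k - 1` rows rules out at most
one of the `k` columns.
-/

open Matrix Finset

lemma sum_prod_finset_eq_prod_one_add {ι R : Type*} [Fintype ι] [CommSemiring R] (f : ι → R) :
    ∑ S : Finset ι, ∏ i ∈ S, f i = ∏ i, (1 + f i) := by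
  rw [prod_one_add, powerset_univ]

lemma vecMul_hadamardExt_apply {n k : ℕ} (g : Fin n → ℝ) (m : Matrix (Fin n) (Fin k) ℝ)
    (j : Fin k) :
    vecMul (fun S : Finset (Fin n) => ∏ i ∈ S, g i) (hadamardExt m) j
      = ∏ i, (1 + g i * m i j) := by
  simp only [vecMul, dotProduct, hadamardExt, of_apply, ← prod_mul_distrib,
    sum_prod_finset_eq_prod_one_add]

lemma e2_prod_finset {ι : Type*} [Fintype ι] (g : ι → ℝ) :
    e2 (fun S : Finset ι => ∏ i ∈ S, g i) = Real.sqrt (∏ i, (1 + g i ^ 2)) := by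
  simp only [e2, ← prod_pow, sum_prod_finset_eq_prod_one_add]

lemma abs_le_e2 {ι : Type*} [Fintype ι] (x : ι → ℝ) (j : ι) : |x j| ≤ e2 x := by
  rw [← Real.sqrt_sq_eq_abs]
  exact Real.sqrt_le_sqrt (single_le_sum (fun i _ => sq_nonneg (x i)) (mem_univ j))

lemma pow_mul_sqrt_prod_le_abs_prod {n : ℕ} {c : ℝ} (hc : 0 ≤ c) (g x : Fin n → ℝ)
    (h : ∀ i, c ^ 2 * (1 + g i ^ 2) ≤ (1 + g i * x i) ^ 2) :
    c ^ n * Real.sqrt (∏ i, (1 + g i ^ 2)) ≤ |∏ i, (1 + g i * x i)| := by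
  calc c ^ n * Real.sqrt (∏ i, (1 + g i ^ 2))
      = Real.sqrt (∏ i, c ^ 2 * (1 + g i ^ 2)) := by
        rw [prod_mul_distrib, prod_const, card_univ, Fintype.card_fin, ← pow_mul, mul_comm 2,
          pow_mul, Real.sqrt_mul (by positivity), Real.sqrt_sq (by positivity)]
    _ ≤ Real.sqrt ((∏ i, (1 + g i * x i)) ^ 2) := by
        rw [← prod_pow]
        exact Real.sqrt_le_sqrt (prod_le_prod (fun i _ => by positivity) (fun i _ => h i))
    _ = |∏ i, (1 + g i * x i)| := Real.sqrt_sq_eq_abs _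

/- If both bounds failed, `|g| ζ ≤ |1 + g x| + |1 + g y| < 2 (ζ/√20) √(1 + g²)` would force
`g² < 1/4`; but then `1 + g x > 1/2` while `(ζ²/20)(1 + g²) < 1/16`. -/
lemma le_sq_one_add_mul_or_of_le_abs_sub {ζ x y : ℝ} (hζ : 0 < ζ) (hx : x ∈ Set.Icc (0 : ℝ) 1)
    (hy : y ∈ Set.Icc (0 : ℝ) 1) (hsep : ζ ≤ |x - y|) (g : ℝ) :
    ζ ^ 2 / 20 * (1 + g ^ 2) ≤ (1 + g * x) ^ 2 ∨ ζ ^ 2 / 20 * (1 + g ^ 2) ≤ (1 + g * y) ^ 2 := by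
  obtain ⟨hx0, hx1⟩ := hx
  obtain ⟨hy0, hy1⟩ := hy
  by_contra! ⟨h1, h2⟩
  have hζ1 : ζ ≤ 1 := hsep.trans (abs_sub_le_iff.2 ⟨by linarith, by linarith⟩)
  have hsep2 : ζ ^ 2 ≤ (x - y) ^ 2 := by
    simpa only [sq_abs] using pow_le_pow_left₀ hζ.le hsep 2
  have hg : g ^ 2 < 1 / 4 := by
    nlinarith [mul_le_mul_of_nonneg_left hsep2 (sq_nonneg g),
      sq_nonneg ((1 + g * x) + (1 + g * y)), mul_pos hζ hζ]
  nlinarith [mul_nonneg (mul_self_nonneg g) (sub_nonneg.2 hx1), sq_nonneg (g * (1 - x)),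
    sq_nonneg (2 * g + 1), mul_nonneg hx0 (sq_nonneg g)]

lemma exists_forall_not_of_card_lt {ι κ : Type*} [Fintype ι] [Fintype κ] (bad : ι → κ → Prop)
    (hcard : Fintype.card ι < Fintype.card κ) (huniq : ∀ i j j', bad i j → bad i j' → j = j') :
    ∃ j, ∀ i, ¬ bad i j := by
  by_contra! h
  choose row hrow using h
  obtain ⟨j, j', hne, heq⟩ := Fintype.exists_ne_map_eq_of_card_lt row hcard
  exact hne (huniq (row j) j j' (hrow j) (heq ▸ hrow j'))

/-- for ζ-separated m with entries in [0,1] and any g,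
‖hᵀ·H(m)‖₂ ≥ (ζ/(2√5))^{k-1}·‖h‖₂ where h = H(g). -/
theorem stmt2 (k : ℕ) (hk : 1 ≤ k) (ζ : ℝ) (hζ : 0 < ζ)
    (m : Matrix (Fin (k - 1)) (Fin k) ℝ)
    (hm : ∀ i j, m i j ∈ Set.Icc (0 : ℝ) 1)
    (hsep : ∀ i, ∀ j j' : Fin k, j ≠ j' → ζ ≤ |m i j - m i j'|)
    (g : Fin (k - 1) → ℝ) :
    (ζ / (2 * Real.sqrt 5)) ^ (k - 1) * e2 (fun S : Finset (Fin (k - 1)) => ∏ i ∈ S, g i)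
      ≤ e2 (Matrix.vecMul (fun S : Finset (Fin (k - 1)) => ∏ i ∈ S, g i) (hadamardExt m)) := by
  set c := ζ / (2 * Real.sqrt 5)
  have hc : 0 ≤ c := by positivity
  have hcsq : c ^ 2 = ζ ^ 2 / 20 := by
    rw [div_pow, mul_pow, Real.sq_sqrt (by norm_num)]
    norm_num
  obtain ⟨j, hj⟩ := exists_forall_not_of_card_lt
    (fun i j => (1 + g i * m i j) ^ 2 < c ^ 2 * (1 + g i ^ 2))
    (by simp only [Fintype.card_fin]; omega)
    (fun i j j' hbad hbad' => by
      by_contra hne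
      rw [hcsq] at hbad hbad'
      rcases le_sq_one_add_mul_or_of_le_abs_sub hζ (hm i j) (hm i j') (hsep i j j' hne) (g i)
        with h | h <;> linarith)
  calc c ^ (k - 1) * e2 (fun S : Finset (Fin (k - 1)) => ∏ i ∈ S, g i)
      ≤ |∏ i, (1 + g i * m i j)| := by
        rw [e2_prod_finset]
        exact pow_mul_sqrt_prod_le_abs_prod hc g (m · j) (fun i => not_lt.1 (hj i))
    _ ≤ _ := vecMul_hadamardExt_apply g m j ▸ abs_le_e2 _ j
end

section
/- Let m ∈ ℝ^{(k-1)×k} and define the column vector h = (m_{11}; -1) ⊙ (m_{22}; -1) ⊙ ⋯ ⊙ (m_{k-1,k-1}; -1) ∈ ℝ^{2^{k-1}}, i.e., h_S = (-1)^{|S|} ∏_{i∉S} m_{ii}. Then for every j ∈ {1,…,k-1}, h^T · H(m)_{*j} = ∏_{i=1}^{k-1} (m_{ii} - m_{ij}) = 0; in particular h annihilates columns 1 through k-1 of H(m). -/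
open Matrix Finset

/-- the rank-1 vector h with h_S = (-1)^{|S|}·∏_{i∉S} m_{ii}
annihilates columns 1,…,k-1 of H(m): hᵀ·H(m)_{*j} = ∏_i (m_{ii} - m_{ij}) = 0. -/
theorem stmt6 (k : ℕ) (m : Matrix (Fin (k - 1)) (Fin k) ℝ)
    (h : Finset (Fin (k - 1)) → ℝ)
    (hh : ∀ S : Finset (Fin (k - 1)),
      h S = (-1 : ℝ) ^ S.card * ∏ i ∈ Sᶜ, m i (i.castLE (Nat.sub_le k 1))) :
    ∀ j : Fin (k - 1),
      Matrix.vecMul h (hadamardExt m) (j.castLE (Nat.sub_le k 1)) =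
          ∏ i : Fin (k - 1), (m i (i.castLE (Nat.sub_le k 1)) - m i (j.castLE (Nat.sub_le k 1))) ∧
        Matrix.vecMul h (hadamardExt m) (j.castLE (Nat.sub_le k 1)) = 0 := by
  intro j
  set a : Fin (k - 1) → ℝ := fun i => m i (i.castLE (Nat.sub_le k 1)) with ha
  set b : Fin (k - 1) → ℝ := fun i => m i (j.castLE (Nat.sub_le k 1)) with hb
  have key : Matrix.vecMul h (hadamardExt m) (j.castLE (Nat.sub_le k 1)) =
      ∏ i : Fin (k - 1), (a i - b i) := by
    simp only [Matrix.vecMul, dotProduct, hadamardExt, Matrix.of_apply]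
    calc ∑ S : Finset (Fin (k - 1)), h S * ∏ i ∈ S, m i (j.castLE (Nat.sub_le k 1))
        = ∑ S ∈ (Finset.univ : Finset (Fin (k - 1))).powerset,
            (∏ i ∈ S, -(b i)) * ∏ i ∈ Finset.univ \ S, a i := by
          rw [Finset.powerset_univ]
          refine Finset.sum_congr rfl fun S _ => ?_
          rw [hh S, ← Finset.compl_eq_univ_sdiff]
          have : ∏ i ∈ S, -(b i) = (-1 : ℝ) ^ S.card * ∏ i ∈ S, b i := by
            rw [show (fun i => -(b i)) = fun i => (-1 : ℝ) * b i from funext fun i => by ring]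
            rw [Finset.prod_mul_distrib, Finset.prod_const]
          rw [this]; ring
      _ = ∏ i : Fin (k - 1), (-(b i) + a i) := (Finset.prod_add _ _ _).symm
      _ = ∏ i : Fin (k - 1), (a i - b i) := by
          refine Finset.prod_congr rfl fun i _ => ?_; ring
  refine ⟨key, ?_⟩
  rw [key]
  exact Finset.prod_eq_zero (Finset.mem_univ j) (by simp [ha, hb])
end

section
/- For any row vector m ∈ ℝ^k with distinct entries, the inverse of the k×k Vandermonde matrix V(m) with entries V(m)_{ij} = (m_j)^i (i = 0,…,k-1; j = 1,…,k) satisfies ‖V(m)⁻¹‖_∞ ≥ max_i ∏_{j≠i} max{1,|m_j|}/|m_i - m_j|, where ‖·‖_∞ is the maximum-absolute-row-sum norm. -/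
open Matrix Finset

/-!
Row `i` of `V(m)⁻¹` is the coefficient vector of the Lagrange basis polynomial `Lᵢ` of the
nodes `m`. Evaluating `Lᵢ = ∏_{j ≠ i} (X - m_j) / (m_i - m_j)` at the unit complex number `I`
bounds `|Lᵢ(I)|` above by the absolute coefficient sum of `Lᵢ`, and below by the product of
`|I - m_j| / |m_i - m_j|`, where `|I - m_j| = √(1 + m_j²) ≥ max 1 |m_j|`.
-/

open Polynomial

theorem natDegree_lagrange_basis_lt_card {F ι : Type*} [Field F] [DecidableEq ι]
    {s : Finset ι} {m : ι → F} (hm : Set.InjOn m s) {i : ι} (hi : i ∈ s) :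
    (Lagrange.basis s m i).natDegree < #s := by
  rw [Lagrange.natDegree_basis hm hi]
  have := card_pos.mpr ⟨i, hi⟩
  omega

theorem inv_transpose_vandermonde_eq_lagrange_coeff {k : ℕ} (m : Fin k → ℝ)
    (hm : Function.Injective m) :
    (vandermonde m)ᵀ⁻¹ = Matrix.of fun r n : Fin k => (Lagrange.basis univ m r).coeff n := by
  apply inv_eq_left_inv
  ext r j
  have hdeg : (Lagrange.basis univ m r).natDegree < k := by
    simpa using natDegree_lagrange_basis_lt_card hm.injOn (mem_univ r)
  simp only [mul_apply, of_apply, transpose_apply, vandermonde_apply, one_apply]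
  rw [Fin.sum_univ_eq_sum_range (fun n => (Lagrange.basis univ m r).coeff n * m j ^ n),
    ← eval_eq_sum_range' hdeg]
  by_cases h : r = j
  · subst h
    simp [Lagrange.eval_basis_self hm.injOn (mem_univ r)]
  · simp [h, Lagrange.eval_basis_of_ne h (mem_univ j)]

theorem norm_aeval_le_sum_abs_coeff {p : ℝ[X]} {n : ℕ} (hp : p.natDegree < n) {z : ℂ}
    (hz : ‖z‖ ≤ 1) : ‖aeval z p‖ ≤ ∑ i ∈ range n, |p.coeff i| := by
  rw [aeval_eq_sum_range' hp]
  refine (norm_sum_le _ _).trans (sum_le_sum fun i _ => ?_)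
  rw [norm_smul, norm_pow, Real.norm_eq_abs]
  exact mul_le_of_le_one_right (abs_nonneg _) (pow_le_one₀ (norm_nonneg z) hz)

theorem max_one_abs_le_norm_I_sub (x : ℝ) : max 1 |x| ≤ ‖Complex.I - x‖ :=
  max_le (by simpa using Complex.abs_im_le_norm (Complex.I - x))
    (by simpa using Complex.abs_re_le_norm (Complex.I - x))

theorem prod_le_norm_aeval_I_lagrange_basis {ι : Type*} [DecidableEq ι] {s : Finset ι}
    {m : ι → ℝ} (hm : Set.InjOn m s) {i : ι} (hi : i ∈ s) :
    ∏ j ∈ s.erase i, max 1 |m j| / |m i - m j| ≤ ‖aeval Complex.I (Lagrange.basis s m i)‖ := by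
  rw [Lagrange.basis, map_prod, norm_prod]
  refine prod_le_prod (fun j _ => by positivity) fun j hj => ?_
  have hj' := mem_erase.mp hj
  have hne : m i - m j ≠ 0 :=
    sub_ne_zero.mpr fun h => hj'.1 (hm hj'.2 hi h.symm)
  simp only [Lagrange.basisDivisor, map_mul, map_sub, aeval_C, aeval_X, Complex.coe_algebraMap,
    norm_mul, norm_inv, Complex.norm_real, Real.norm_eq_abs, div_eq_inv_mul]
  exact mul_le_mul_of_nonneg_left (max_one_abs_le_norm_I_sub (m j)) (by positivity)

/-- lower bound on the max-row-sum norm of the inverse of the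
Vandermonde matrix V(m)_{ij} = (m_j)^i with distinct nodes:
‖V(m)⁻¹‖_∞ ≥ max_i ∏_{j≠i} max{1,|m_j|}/|m_i - m_j|. -/
theorem stmt11 (k : ℕ) (m : Fin k → ℝ) (hm : Function.Injective m) :
    ∀ i : Fin k,
      ∏ j ∈ Finset.univ.erase i, max 1 |m j| / |m i - m j| ≤
        ⨆ r : Fin k, ∑ j, |((Matrix.vandermonde m)ᵀ)⁻¹ r j| := by
  intro i
  have hdeg : (Lagrange.basis univ m i).natDegree < k := by
    simpa using natDegree_lagrange_basis_lt_card hm.injOn (mem_univ i)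
  have hrow :
      ∑ j, |(vandermonde m)ᵀ⁻¹ i j| = ∑ n ∈ range k, |(Lagrange.basis univ m i).coeff n| := by
    simp only [inv_transpose_vandermonde_eq_lagrange_coeff m hm, of_apply]
    exact Fin.sum_univ_eq_sum_range (fun n => |(Lagrange.basis univ m i).coeff n|) k
  calc ∏ j ∈ univ.erase i, max 1 |m j| / |m i - m j|
      ≤ ‖aeval Complex.I (Lagrange.basis univ m i)‖ :=
        prod_le_norm_aeval_I_lagrange_basis hm.injOn (mem_univ i)
    _ ≤ ∑ j, |(vandermonde m)ᵀ⁻¹ i j| :=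
        hrow ▸ norm_aeval_le_sum_abs_coeff hdeg Complex.norm_I.le
    _ ≤ ⨆ r, ∑ j, |(vandermonde m)ᵀ⁻¹ r j| :=
        le_ciSup (f := fun r => ∑ j, |(vandermonde m)ᵀ⁻¹ r j|) (Set.finite_range _).bddAbove i
end
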